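/- Robust feasible-set recursion for the 'eventually' operator (instance of Theorem 3). Assume U is nonempty. Fix a horizon T ∈ ℕ, a set H ⊆ ℝ^n, a starting instant s ≤ T, a disturbance set W ⊆ ℝ^n and L ≥ 0; for j ≥ s let W_j = W + L•W + L²•W + ⋯ + L^{j−s}•W denote the Minkowski sum of the scaled copies L^i•W for i = 0, …, j−s. For s ≤ k ≤ T define X̂_{s,k} = {x ∈ ℝ^n : there exists a strategy σ on {k, …, T−1} such that for every disturbance sequence with w_j ∈ W_j for all j, the trajectory obtained by playing σ from x satisfies x_j ∈ H for some j ∈ {k, …, T}}. Then X̂_{s,T} = H and, for every k with s ≤ k < T, X̂_{s,k} = H ∪ Υ_r(X̂_{s,k+1}, W_k). -/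
import Mathlib


open Pointwise

/-- The state space `ℝ^n`. -/
abbrev Vec (n : ℕ) := EuclideanSpace ℝ (Fin n)

/-- Auxiliary: trajectory under a strategy, `i` steps after the starting instant `k`. -/
def strajAux {n m : ℕ} (f : Vec n → Vec m → Vec n) (k : ℕ) (x : Vec n)
    (σ : ℕ → (ℕ → Vec n) → Vec m) (w : ℕ → Vec n) : ℕ → Vec n
  | 0 => x
  | i + 1 => f (strajAux f k x σ w i) (σ (k + i) w) + w (k + i)

/-- Trajectory obtained by playing strategy `σ` from state `x` at instant `k` against
the disturbance sequence `w`: `x_k = x`, `x_{j+1} = f (x_j, σ_j(w)) + w_j`. -/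
def straj {n m : ℕ} (f : Vec n → Vec m → Vec n) (k : ℕ) (x : Vec n)
    (σ : ℕ → (ℕ → Vec n) → Vec m) (w : ℕ → Vec n) (j : ℕ) : Vec n :=
  strajAux f k x σ w (j - k)

/-- A strategy starting at instant `k` is causal: the input chosen at time `j` depends
only on the disturbance history `w_k, …, w_{j-1}`. -/
def Causal {n m : ℕ} (k : ℕ) (σ : ℕ → (ℕ → Vec n) → Vec m) : Prop :=
  ∀ (j : ℕ) (w w' : ℕ → Vec n), (∀ i, k ≤ i → i < j → w i = w' i) → σ j w = σ j w'

/-- Robust one-step set `Υ_r(S, D) = {x : ∃ u ∈ U, ∀ w ∈ D, f(x,u) + w ∈ S}`. -/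
def oneStepR {n m : ℕ} (f : Vec n → Vec m → Vec n) (U : Set (Vec m))
    (S D : Set (Vec n)) : Set (Vec n) :=
  {x | ∃ u ∈ U, ∀ w ∈ D, f x u + w ∈ S}

/-- The magnified disturbance set at instant `j` for starting instant `s`:
`W_j = ⊕_{i=0}^{j-s} Lⁱ • W` (Minkowski sum of the scaled copies of `W`). -/
def magW {n : ℕ} (W : Set (Vec n)) (L : ℝ) (s j : ℕ) : Set (Vec n) :=
  ∑ i ∈ Finset.range (j - s + 1), L ^ i • W


private lemma strajAux_congr {n m : ℕ} (f : Vec n → Vec m → Vec n) (k : ℕ) (x : Vec n)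
    (σ τ : ℕ → (ℕ → Vec n) → Vec m) (w v : ℕ → Vec n)
    (hσ : ∀ j, k ≤ j → σ j w = τ j v) (hw : ∀ j, k ≤ j → w j = v j) :
    ∀ i, strajAux f k x σ w i = strajAux f k x τ v i := by
  intro i
  induction i with
  | zero => rfl
  | succ i ih =>
    simp only [strajAux, ih, hσ (k + i) (Nat.le_add_right _ _),
      hw (k + i) (Nat.le_add_right _ _)]

private lemma strajAux_shift {n m : ℕ} (f : Vec n → Vec m → Vec n) (k : ℕ) (x : Vec n)
    (σ : ℕ → (ℕ → Vec n) → Vec m) (w : ℕ → Vec n) :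
    ∀ i, strajAux f k x σ w (i + 1) = strajAux f (k + 1) (f x (σ k w) + w k) σ w i := by
  intro i
  induction i with
  | zero => rfl
  | succ i ih =>
    have h : k + (i + 1) = (k + 1) + i := by omega
    show f (strajAux f k x σ w (i + 1)) (σ (k + (i + 1)) w) + w (k + (i + 1)) = _
    rw [ih, h]
    rfl

/-- Robust feasible-set recursion for the `eventually` operator `F_{[k,T]} (x ∈ H)`:
`X̂_{s,T} = H` and `X̂_{s,k} = H ∪ Υ_r(X̂_{s,k+1}, W_k)` for `s ≤ k < T`. -/
theorem robust_eventually_feasible_set_recursion {n m : ℕ}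
    (f : Vec n → Vec m → Vec n) (U : Set (Vec m)) (hU : U.Nonempty)
    (T : ℕ) (H : Set (Vec n)) (s : ℕ) (hs : s ≤ T)
    (W : Set (Vec n)) (L : ℝ) (hL : 0 ≤ L)
    (X : ℕ → Set (Vec n))
    (hX : ∀ k, s ≤ k → k ≤ T → X k =
      {x | ∃ σ : ℕ → (ℕ → Vec n) → Vec m,
        (∀ j w, k ≤ j → j < T → σ j w ∈ U) ∧ Causal k σ ∧
        ∀ w : ℕ → Vec n, (∀ j, k ≤ j → j < T → w j ∈ magW W L s j) →
          ∃ j, k ≤ j ∧ j ≤ T ∧ straj f k x σ w j ∈ H}) :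
    X T = H ∧
      ∀ k, s ≤ k → k < T → X k = H ∪ oneStepR f U (X (k + 1)) (magW W L s k) := by
  obtain ⟨u0, hu0⟩ := hU
  constructor
  · -- X T = H
    rw [hX T hs le_rfl]
    ext x
    constructor
    · rintro ⟨σ, hσU, hσC, hσ⟩
      obtain ⟨j, hkj, hjT, hH⟩ := hσ (fun _ => 0)
        (fun j hj hj' => absurd (lt_of_le_of_lt hj hj') (lt_irrefl _))
      have hjeq : j = T := le_antisymm hjT hkj
      subst hjeq
      simpa [straj, strajAux] using hH
    · intro hx
      exact ⟨fun _ _ => u0, fun _ _ _ _ => hu0, fun _ _ _ _ => rfl,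
        fun w _ => ⟨T, le_rfl, le_rfl, by simpa [straj, strajAux] using hx⟩⟩
  · intro k hsk hkT
    have hk1 : s ≤ k + 1 := le_trans hsk (Nat.le_succ k)
    ext x
    constructor
    · -- ⊆
      intro hx
      rw [hX k hsk (le_of_lt hkT)] at hx
      obtain ⟨σ, hσU, hσC, hσ⟩ := hx
      by_cases hxH : x ∈ H
      · exact Or.inl hxH
      right
      set u := σ k (fun _ => 0) with hu_def
      refine ⟨u, hσU k _ le_rfl hkT, ?_⟩
      intro w0 hw0
      rw [hX (k + 1) hk1 hkT]
      refine ⟨fun j w => σ j (fun i => if i = k then w0 else w i), ?_, ?_, ?_⟩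
      · intro j w hj hjT
        exact hσU j _ (le_trans (Nat.le_succ k) hj) hjT
      · intro j w w' hag
        apply hσC j
        intro i h1 h2
        by_cases hik : i = k
        · simp [hik]
        · simp only [if_neg hik]
          exact hag i (by omega) h2
      · intro w hadm
        set w'' : ℕ → Vec n := fun i => if i = k then w0 else w i with hw''_def
        have hadm'' : ∀ j, k ≤ j → j < T → w'' j ∈ magW W L s j := by
          intro j hj hjT
          by_cases h : j = k
          · subst h; simpa [hw''_def] using hw0
          · simp only [hw''_def, if_neg h]
            exact hadm j (by omega) hjT
        obtain ⟨j, hkj, hjT, hH⟩ := hσ w'' hadm''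
        have hj1 : k + 1 ≤ j := by
          rcases Nat.lt_or_ge k j with h | h
          · omega
          · exfalso
            have hjk : j = k := by omega
            subst hjk
            have : straj f j x σ w'' j = x := by simp [straj, strajAux]
            rw [this] at hH
            exact hxH hH
        refine ⟨j, hj1, hjT, ?_⟩
        have huk : σ k w'' = u := by
          apply hσC k
          intro i h1 h2
          exact absurd (lt_of_le_of_lt h1 h2) (lt_irrefl _)
        have hcongr : ∀ i, strajAux f (k + 1) (f x u + w0) (fun j w => σ j
              (fun i => if i = k then w0 else w i)) w i
            = strajAux f (k + 1) (f x u + w0) σ w'' i := by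
          apply strajAux_congr
          · intro j hj; rfl
          · intro j hj
            simp only [hw''_def, if_neg (by omega : j ≠ k)]
        have hx1 : f x u + w0 = f x (σ k w'') + w'' k := by
          rw [huk]; simp [hw''_def]
        have hkey : straj f (k + 1) (f x u + w0) (fun j w => σ j
              (fun i => if i = k then w0 else w i)) w j
            = straj f k x σ w'' j := by
          show strajAux _ (k+1) _ _ w (j - (k+1)) = strajAux _ k x σ w'' (j - k)
          have hsub : j - k = (j - (k + 1)) + 1 := by omega
          rw [hcongr, hx1, hsub, strajAux_shift]
        rw [hkey]
        exact hH
    · -- ⊇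
      rintro (hxH | ⟨u, huU, hu⟩)
      · rw [hX k hsk (le_of_lt hkT)]
        refine ⟨fun _ _ => u0, fun _ _ _ _ => hu0, fun _ _ _ _ => rfl, fun w _ =>
          ⟨k, le_rfl, le_of_lt hkT, by simpa [straj, strajAux] using hxH⟩⟩
      · have hch : ∀ w0 : Vec n, ∃ σ' : ℕ → (ℕ → Vec n) → Vec m,
            (∀ j w, k + 1 ≤ j → j < T → σ' j w ∈ U) ∧ Causal (k + 1) σ' ∧
            (w0 ∈ magW W L s k →
              ∀ w : ℕ → Vec n, (∀ j, k + 1 ≤ j → j < T → w j ∈ magW W L s j) →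
                ∃ j, k + 1 ≤ j ∧ j ≤ T ∧ straj f (k + 1) (f x u + w0) σ' w j ∈ H) := by
          intro w0
          by_cases h : w0 ∈ magW W L s k
          · have hmem := hu w0 h
            rw [hX (k + 1) hk1 hkT] at hmem
            obtain ⟨σ', h1, h2, h3⟩ := hmem
            exact ⟨σ', h1, h2, fun _ => h3⟩
          · exact ⟨fun _ _ => u0, fun _ _ _ _ => hu0, fun _ _ _ _ => rfl,
              fun h' => absurd h' h⟩
        choose g hgU hgC hgS using hch
        rw [hX k hsk (le_of_lt hkT)]
        refine ⟨fun j w => if j ≤ k then u else g (w k) j w, ?_, ?_, ?_⟩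
        · intro j w hkj hjT
          by_cases h : j ≤ k
          · simpa [h] using huU
          · simp only [if_neg h]
            exact hgU (w k) j w (by omega) hjT
        · intro j w w' hag
          by_cases h : j ≤ k
          · simp [h]
          · have hwk : w k = w' k := hag k le_rfl (by omega)
            simp only [if_neg h, hwk]
            exact hgC (w' k) j w w' (fun i h1 h2 => hag i (by omega) h2)
        · intro w hadm
          have hwk : w k ∈ magW W L s k := hadm k le_rfl hkT
          obtain ⟨j, hj1, hjT, hH⟩ := hgS (w k) hwk w
            (fun j hj hjT => hadm j (by omega) hjT)
          refine ⟨j, by omega, hjT, ?_⟩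
          have hcongr : ∀ i, strajAux f (k + 1) (f x u + w k)
                (fun j w' => if j ≤ k then u else g (w' k) j w') w i
              = strajAux f (k + 1) (f x u + w k) (g (w k)) w i := by
            apply strajAux_congr
            · intro j hj
              simp only [if_neg (by omega : ¬ j ≤ k)]
            · intro j hj; rfl
          have hkey : straj f k x (fun j w' => if j ≤ k then u else g (w' k) j w') w j
              = straj f (k + 1) (f x u + w k) (g (w k)) w j := by
            show strajAux _ k x _ w (j - k) = strajAux _ (k+1) _ _ w (j - (k+1))
            rw [← hcongr]
            have hsub : j - k = (j - (k + 1)) + 1 := by omega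
            rw [hsub, strajAux_shift]
            simp
          rw [hkey]
          exact hH
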